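/- arXiv:2211.00537 — 6 statements merged into one kernel-verified Lean document; each statement's English description precedes it below -/
import Mathlib

section
/- Let K ≥ 1, let π₁,…,π_K > 0 with Σₖ πₖ = 1, let θ₁*,…,θ_K* be real numbers, and let p(y) = Σₖ πₖ (1/√(2π)) e^{−(y−θₖ*)²/2} be the Gaussian mixture density. Fix a current parameter vector θ = (θ₁,…,θ_K) and define the posterior weights qₖ(y;θ) = e^{−(y−θₖ)²/2} / Σ_{k'} e^{−(y−θ_{k'})²/2}. Let c = ∫ qₖ(y;θ) p(y) dy (which is strictly positive), let M₀(θₖ) = (∫ qₖ(y;θ) y p(y) dy)/c, and for 0 ≤ γ < 1 let M_γ(θₖ) = ((1−γ) ∫ qₖ(y;θ) y p(y) dy + γ πₖ θₖ*) / ((1−γ) c + γ πₖ). Then |M_γ(θₖ) − θₖ*| = βₖ |M₀(θₖ) − θₖ*|, where βₖ = c / (πₖγ/(1−γ) + c) < 1 when γ > 0. -/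
open MeasureTheory

lemma gauss_integrable (a : ℝ) :
    Integrable (fun y : ℝ => Real.exp (-(y - a) ^ 2 / 2)) := by
  have h : Integrable (fun y : ℝ => Real.exp (-(1/2 : ℝ) * y ^ 2)) :=
    integrable_exp_neg_mul_sq (by norm_num)
  have := h.comp_sub_right a
  convert this using 2 with y
  ring_nf

/-- Theorem 1: semi-supervised population EM contraction for a
`K`-component Gaussian mixture with unit variances. -/
theorem semi_supervised_em_gaussian_mixture_contraction
    (K : ℕ) (hK : 1 ≤ K)
    (pi : Fin K → ℝ) (hpi : ∀ k, 0 < pi k) (hsum : ∑ k, pi k = 1)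
    (θstar θ : Fin K → ℝ) (γ : ℝ) (hγ0 : 0 ≤ γ) (hγ1 : γ < 1) (k : Fin K)
    (p : ℝ → ℝ)
    (hp : p = fun y => ∑ k', pi k' *
      ((1 / Real.sqrt (2 * Real.pi)) * Real.exp (-(y - θstar k') ^ 2 / 2)))
    (q : ℝ → ℝ)
    (hq : q = fun y => Real.exp (-(y - θ k) ^ 2 / 2) /
      ∑ k', Real.exp (-(y - θ k') ^ 2 / 2))
    (c : ℝ) (hc : c = ∫ y : ℝ, q y * p y)
    (M0 Mγ β : ℝ)
    (hM0 : M0 = (∫ y : ℝ, q y * y * p y) / c)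
    (hMγ : Mγ = ((1 - γ) * (∫ y : ℝ, q y * y * p y) + γ * pi k * θstar k) /
      ((1 - γ) * c + γ * pi k))
    (hβ : β = c / (pi k * γ / (1 - γ) + c)) :
    0 < c ∧
    |Mγ - θstar k| = β * |M0 - θstar k| ∧
    (0 < γ → β < 1) := by
  haveI : Nonempty (Fin K) := Fin.pos_iff_nonempty.mp hK
  -- positivity of p
  have hppos : ∀ y, 0 < p y := by
    intro y
    rw [hp]
    apply Finset.sum_pos
    · intro k' _
      have h1 : 0 < (1 : ℝ) / Real.sqrt (2 * Real.pi) :=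
        div_pos one_pos (Real.sqrt_pos.mpr (by positivity))
      exact mul_pos (hpi k') (mul_pos h1 (Real.exp_pos _))
    · exact Finset.univ_nonempty
  -- q bounds
  have hqpos : ∀ y, 0 < q y := by
    intro y
    rw [hq]
    apply div_pos (Real.exp_pos _)
    apply Finset.sum_pos (fun _ _ => Real.exp_pos _) Finset.univ_nonempty
  have hqle : ∀ y, q y ≤ 1 := by
    intro y
    rw [hq]
    rw [div_le_one (Finset.sum_pos (fun _ _ => Real.exp_pos _) Finset.univ_nonempty)]
    exact Finset.single_le_sum (f := fun k' => Real.exp (-(y - θ k') ^ 2 / 2))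
      (fun _ _ => (Real.exp_pos _).le) (Finset.mem_univ k)
  -- integrability of p
  have hpint : Integrable p := by
    rw [hp]
    apply integrable_finset_sum
    intro k' _
    exact ((gauss_integrable (θstar k')).const_mul _).const_mul _
  -- continuity / measurability of q
  have hqcont : Continuous q := by
    rw [hq]
    apply Continuous.div
    · fun_prop
    · fun_prop
    · intro y
      exact (Finset.sum_pos (fun _ _ => Real.exp_pos _) Finset.univ_nonempty).ne'
  -- integrability of q * p
  have hqpint : Integrable (fun y => q y * p y) := by
    apply hpint.mono' (hqcont.aestronglyMeasurable.mul hpint.aestronglyMeasurable)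
    filter_upwards with y
    show |q y * p y| ≤ p y
    rw [abs_mul, abs_of_nonneg (hqpos y).le, abs_of_nonneg (hppos y).le]
    calc q y * p y ≤ 1 * p y := by
          apply mul_le_mul_of_nonneg_right (hqle y) (hppos y).le
      _ = p y := one_mul _
  -- c > 0
  have hcpos : 0 < c := by
    rw [hc]
    rw [integral_pos_iff_support_of_nonneg
      (fun y => mul_nonneg (hqpos y).le (hppos y).le) hqpint]
    have : Function.support (fun y => q y * p y) = Set.univ := by
      ext y
      simp only [Function.support, Set.mem_setOf_eq, Set.mem_univ, iff_true]
      exact (mul_pos (hqpos y) (hppos y)).ne'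
    rw [this]
    simp
  refine ⟨hcpos, ?_, ?_⟩
  · -- main identity
    have h1 : (1 : ℝ) - γ ≠ 0 := by linarith
    have hD : 0 < (1 - γ) * c + γ * pi k := by
      have := (hpi k)
      have h2 : 0 < (1 - γ) * c := by
        apply mul_pos (by linarith) hcpos
      nlinarith
    have hβd : 0 < pi k * γ / (1 - γ) + c := by
      have : 0 ≤ pi k * γ / (1 - γ) := by
        apply div_nonneg (mul_nonneg (hpi k).le hγ0) (by linarith)
      linarith
    have hβ' : β = ((1 - γ) * c) / ((1 - γ) * c + γ * pi k) := by
      rw [hβ]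
      rw [div_eq_div_iff hβd.ne' hD.ne']
      field_simp
      ring
    have key : Mγ - θstar k = β * (M0 - θstar k) := by
      rw [hMγ, hM0, hβ']
      field_simp
      ring
    rw [key, abs_mul, abs_of_nonneg]
    rw [hβ]
    exact div_nonneg hcpos.le hβd.le
  · intro hγ
    rw [hβ]
    have hx : 0 < pi k * γ / (1 - γ) :=
      div_pos (mul_pos (hpi k) hγ) (by linarith)
    rw [div_lt_one (by linarith)]
    linarith
end

section
/- Let Q : ℝ × ℝ → ℝ and let λ > 0. Suppose the map x ↦ Q(x; θ*) is differentiable and λ-strongly concave (i.e., (∂₁Q(x;θ*) − ∂₁Q(x';θ*))(x − x') ≤ −λ(x − x')² for all x, x'). Suppose θ* is a stationary point of Q(·;θ*), i.e., ∂₁Q(θ*;θ*) = 0. Let θ ∈ ℝ and let M(θ) be a point with ∂₁Q(M(θ); θ) = 0 (the M-step maximizer), and suppose the gradient-smoothness condition |∂₁Q(M(θ); θ*) − ∂₁Q(M(θ); θ)| ≤ γ |θ − θ*| holds with 0 ≤ γ ≤ λ. Then |M(θ) − θ*| ≤ (γ/λ) |θ − θ*|. -/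
/-- Lemma 2, Balakrishnan–Wainwright–Yu, one-dimensional: if
`x ↦ Q x θstar` is differentiable and `lam`-strongly concave with stationary
point `θstar`, `Mθ` is a stationary point of `x ↦ Q x θ`, and the
gradient-smoothness condition holds with coefficient `γ ≤ lam`, then the EM
operator contracts at rate `γ / lam`.  Here `g x θ'` is the partial derivative
of `Q` in its first argument. -/
theorem em_contraction_strong_concavity_gradient_smoothness
    (Q g : ℝ → ℝ → ℝ) (lam γ θstar θ Mθ : ℝ)
    (hlam : 0 < lam)
    (hderiv : ∀ x θ', HasDerivAt (fun x' => Q x' θ') (g x θ') x)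
    (hconc : ∀ x x', (g x θstar - g x' θstar) * (x - x') ≤ -lam * (x - x') ^ 2)
    (hstat : g θstar θstar = 0)
    (hM : g Mθ θ = 0)
    (hsmooth : |g Mθ θstar - g Mθ θ| ≤ γ * |θ - θstar|)
    (hγ0 : 0 ≤ γ) (hγlam : γ ≤ lam) :
    |Mθ - θstar| ≤ (γ / lam) * |θ - θstar| := by
  have h1 := hconc Mθ θstar
  rw [hstat, sub_zero] at h1
  have h2 : lam * (Mθ - θstar) ^ 2 ≤ |g Mθ θstar| * |Mθ - θstar| := by
    have : -(g Mθ θstar * (Mθ - θstar)) ≤ |g Mθ θstar| * |Mθ - θstar| := by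
      rw [← abs_mul]
      exact neg_le_abs _
    nlinarith
  rw [hM, sub_zero] at hsmooth
  have h3 : lam * |Mθ - θstar| ^ 2 ≤ γ * |θ - θstar| * |Mθ - θstar| := by
    have := mul_le_mul_of_nonneg_right hsmooth (abs_nonneg (Mθ - θstar))
    calc lam * |Mθ - θstar| ^ 2 = lam * (Mθ - θstar) ^ 2 := by rw [sq_abs]
      _ ≤ |g Mθ θstar| * |Mθ - θstar| := h2
      _ ≤ γ * |θ - θstar| * |Mθ - θstar| := this
  rcases eq_or_lt_of_le (abs_nonneg (Mθ - θstar)) with h | h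
  · rw [← h]; positivity
  · rw [div_mul_eq_mul_div, le_div_iff₀ hlam]
    nlinarith
end

section
/- Let θ* > 0, let p_{θ*}(y) = (1/(2√(2π)))(e^{−(y−θ*)²/2} + e^{−(y+θ*)²/2}), let q(y;θ) = 1/(1 + e^{2yθ}), and define M₀(θ) = ∫_ℝ (1 − 2 q(y;θ)) y p_{θ*}(y) dy. Then M₀ is differentiable on ℝ with derivative M₀'(θ) = 4 ∫_ℝ y² / (e^{−yθ} + e^{yθ})² p_{θ*}(y) dy ≥ 0; in particular M₀ is monotone increasing. -/
/-!
Since `1 - 2 / (1 + e^{2x}) = tanh x`, the EM map is `M₀(θ) = ∫ tanh(yθ) y p(y) dy`, and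
`∂/∂θ tanh(yθ) y = y² / cosh²(yθ) = 4 y² / (e^{-yθ} + e^{yθ})²`. Both integrands are bounded by
`(1 + y²) p(y)` because `|tanh| ≤ 1` and `cosh ≥ 1`, and this function is integrable since `p`
is a mixture of Gaussians; dominated convergence then justifies differentiating under the
integral. The derivative is nonnegative, so `M₀` is monotone.
-/

open MeasureTheory Real

theorem Real.hasDerivAt_tanh (x : ℝ) : HasDerivAt tanh (1 / cosh x ^ 2) x := by
  have h := (hasDerivAt_sinh x).div (hasDerivAt_cosh x) (cosh_pos x).ne'
  have htanh : sinh / cosh = tanh := funext fun x => (tanh_eq_sinh_div_cosh x).symm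
  rwa [htanh, ← sq, ← sq, cosh_sq_sub_sinh_sq x] at h

@[fun_prop]
theorem Real.continuous_tanh : Continuous tanh :=
  continuous_iff_continuousAt.2 fun x => (hasDerivAt_tanh x).continuousAt

theorem Real.one_sub_two_div_one_add_exp_two_mul (x : ℝ) :
    1 - 2 * (1 / (1 + exp (2 * x))) = tanh x := by
  have hx : exp (2 * x) = exp x ^ 2 := by rw [← exp_nat_mul]; norm_num
  rw [tanh_eq, exp_neg, hx]
  field_simp
  ring

theorem Real.exp_neg_add_exp (x : ℝ) : exp (-x) + exp x = 2 * cosh x := by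
  rw [cosh_eq]
  ring

theorem integrable_one_add_sq_mul_exp_neg_sub_sq_div_two (c : ℝ) :
    Integrable fun y : ℝ => (1 + y ^ 2) * exp (-(y - c) ^ 2 / 2) := by
  have hmoment (n : ℕ) : Integrable fun u : ℝ => u ^ n * exp (-(1 / 2) * u ^ 2) := by
    simpa [rpow_natCast] using
      integrable_rpow_mul_exp_neg_mul_sq (b := 1 / 2) (by norm_num)
        (by linarith [n.cast_nonneg (α := ℝ)] : (-1 : ℝ) < n)
  have hcentered : Integrable fun u : ℝ => (1 + (u + c) ^ 2) * exp (-u ^ 2 / 2) := by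
    refine ((((hmoment 0).const_mul (1 + c ^ 2)).add ((hmoment 1).const_mul (2 * c))).add
      (hmoment 2)).congr (ae_of_all _ fun u => ?_)
    simp only [Pi.add_apply]
    rw [show -(1 / 2 : ℝ) * u ^ 2 = -u ^ 2 / 2 by ring]
    ring
  simpa using hcentered.comp_sub_right c

section DifferentiationUnderIntegral

variable {p : ℝ → ℝ}

theorem aestronglyMeasurable_of_integrable_one_add_sq_mul
    (hp : Integrable fun y => (1 + y ^ 2) * p y) : AEStronglyMeasurable p := by
  have hinv : Continuous fun y : ℝ => (1 + y ^ 2)⁻¹ :=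
    (by fun_prop : Continuous fun y : ℝ => 1 + y ^ 2).inv₀ fun y => by positivity
  refine (hinv.aestronglyMeasurable.mul hp.aestronglyMeasurable).congr (ae_of_all _ fun y => ?_)
  exact inv_mul_cancel_left₀ (by positivity) (p y)

theorem abs_mul_le_one_add_sq_mul_abs {a : ℝ} (ha : |a| ≤ 1) (y b : ℝ) :
    |a * y * b| ≤ (1 + y ^ 2) * |b| := by
  rw [abs_mul, abs_mul]
  gcongr
  nlinarith [abs_nonneg a, abs_nonneg y, sq_abs y, sq_nonneg (|y| - 1)]

theorem hasDerivAt_integral_tanh_mul_mul (hp : Integrable fun y => (1 + y ^ 2) * p y) (θ : ℝ) :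
    HasDerivAt (fun θ => ∫ y, tanh (y * θ) * y * p y)
      (∫ y, y ^ 2 / cosh (y * θ) ^ 2 * p y) θ := by
  have hp_meas := aestronglyMeasurable_of_integrable_one_add_sq_mul hp
  have hF_meas (x : ℝ) : AEStronglyMeasurable fun y => tanh (y * x) * y * p y :=
    (by fun_prop : Continuous fun y => tanh (y * x) * y).aestronglyMeasurable.mul hp_meas
  have hF'_cont : Continuous fun y => y ^ 2 / cosh (y * θ) ^ 2 := by
    fun_prop (disch := intro; positivity)
  have hF'_meas : AEStronglyMeasurable fun y => y ^ 2 / cosh (y * θ) ^ 2 * p y :=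
    hF'_cont.aestronglyMeasurable.mul hp_meas
  have hF_int : Integrable fun y => tanh (y * θ) * y * p y :=
    hp.norm.mono' (hF_meas θ) (ae_of_all _ fun y => by
      simpa [abs_mul, abs_of_pos (by positivity : (0 : ℝ) < 1 + y ^ 2)] using
        abs_mul_le_one_add_sq_mul_abs (abs_tanh_lt_one (y * θ)).le y (p y))
  have hF'_le : ∀ᵐ y, ∀ x ∈ Metric.ball θ 1,
      ‖y ^ 2 / cosh (y * x) ^ 2 * p y‖ ≤ ‖(1 + y ^ 2) * p y‖ := by
    refine ae_of_all _ fun y x _ => ?_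
    rw [norm_mul, norm_mul]
    gcongr ?_ * _
    rw [norm_of_nonneg (by positivity), norm_of_nonneg (by positivity)]
    calc y ^ 2 / cosh (y * x) ^ 2 ≤ y ^ 2 :=
          div_le_self (sq_nonneg y) (one_le_pow₀ (one_le_cosh _))
      _ ≤ 1 + y ^ 2 := by linarith
  have hF_deriv : ∀ᵐ y, ∀ x ∈ Metric.ball θ 1,
      HasDerivAt (fun x => tanh (y * x) * y * p y) (y ^ 2 / cosh (y * x) ^ 2 * p y) x :=
    ae_of_all _ fun y x _ =>
      ((((hasDerivAt_tanh (y * x)).comp x ((hasDerivAt_id x).const_mul y)).mul_const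
        y).mul_const (p y)).congr_deriv (by ring)
  exact (hasDerivAt_integral_of_dominated_loc_of_deriv_le (Metric.ball_mem_nhds θ one_pos)
    (.of_forall hF_meas) hF_int hF'_meas hF'_le hp.norm hF_deriv).2

end DifferentiationUnderIntegral

theorem symmetric_gaussian_mixture_em_map_derivative_and_monotone_general
    (θstar : ℝ)
    (p : ℝ → ℝ)
    (hp : p = fun y => (1 / (2 * Real.sqrt (2 * Real.pi))) *
      (Real.exp (-(y - θstar) ^ 2 / 2) + Real.exp (-(y + θstar) ^ 2 / 2)))
    (q : ℝ → ℝ → ℝ)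
    (hq : q = fun θ y => 1 / (1 + Real.exp (2 * y * θ)))
    (M0 : ℝ → ℝ)
    (hM0 : M0 = fun θ => ∫ y : ℝ, (1 - 2 * q θ y) * y * p y)
    (D : ℝ → ℝ)
    (hD : D = fun θ => 4 * ∫ y : ℝ,
      y ^ 2 / (Real.exp (-(y * θ)) + Real.exp (y * θ)) ^ 2 * p y) :
    (∀ θ : ℝ, HasDerivAt M0 (D θ) θ ∧ 0 ≤ D θ) ∧ Monotone M0 := by
  have hp_nonneg (y : ℝ) : 0 ≤ p y := by rw [hp]; positivity
  have hp_int : Integrable fun y => (1 + y ^ 2) * p y := by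
    refine (((integrable_one_add_sq_mul_exp_neg_sub_sq_div_two θstar).add
      (integrable_one_add_sq_mul_exp_neg_sub_sq_div_two (-θstar))).const_mul
      (1 / (2 * √(2 * π)))).congr (ae_of_all _ fun y => ?_)
    simp only [hp, Pi.add_apply, sub_neg_eq_add]
    ring
  have hM0_eq : M0 = fun θ => ∫ y, tanh (y * θ) * y * p y := by
    simp_rw [hM0, hq, mul_assoc (2 : ℝ), one_sub_two_div_one_add_exp_two_mul]
  have hD_eq : D = fun θ => ∫ y, y ^ 2 / cosh (y * θ) ^ 2 * p y := by
    ext θ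
    simp_rw [hD, ← integral_const_mul]
    congr with y
    rw [exp_neg_add_exp]
    ring
  have hderiv (θ : ℝ) : HasDerivAt M0 (D θ) θ :=
    hM0_eq ▸ hD_eq ▸ hasDerivAt_integral_tanh_mul_mul hp_int θ
  have hD_nonneg (θ : ℝ) : 0 ≤ D θ := hD_eq ▸ integral_nonneg fun y => by
    have := hp_nonneg y
    positivity
  exact ⟨fun θ => ⟨hderiv θ, hD_nonneg θ⟩, monotone_of_hasDerivAt_nonneg hderiv hD_nonneg⟩

/-- the unsupervised population EM map `M₀` of the symmetric
two-component Gaussian mixture is differentiable with the stated nonnegative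
derivative; in particular it is monotone increasing. -/
theorem symmetric_gaussian_mixture_em_map_derivative_and_monotone
    (θstar : ℝ) (hθstar : 0 < θstar)
    (p : ℝ → ℝ)
    (hp : p = fun y => (1 / (2 * Real.sqrt (2 * Real.pi))) *
      (Real.exp (-(y - θstar) ^ 2 / 2) + Real.exp (-(y + θstar) ^ 2 / 2)))
    (q : ℝ → ℝ → ℝ)
    (hq : q = fun θ y => 1 / (1 + Real.exp (2 * y * θ)))
    (M0 : ℝ → ℝ)
    (hM0 : M0 = fun θ => ∫ y : ℝ, (1 - 2 * q θ y) * y * p y)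
    (D : ℝ → ℝ)
    (hD : D = fun θ => 4 * ∫ y : ℝ,
      y ^ 2 / (Real.exp (-(y * θ)) + Real.exp (y * θ)) ^ 2 * p y) :
    (∀ θ : ℝ, HasDerivAt M0 (D θ) θ ∧ 0 ≤ D θ) ∧ Monotone M0 :=
  symmetric_gaussian_mixture_em_map_derivative_and_monotone_general θstar p hp q hq M0 hM0 D hD
end

section
/- Let θ* > 0, let p_{θ*}(y) = (1/(2√(2π)))(e^{−(y−θ*)²/2} + e^{−(y+θ*)²/2}), let q(y;θ) = 1/(1 + e^{2yθ}), and define M₀(θ) = ∫_ℝ (1 − 2 q(y;θ)) y p_{θ*}(y) dy. Then M₀ is twice differentiable on (0, ∞) with M₀''(θ) = −8 ∫_ℝ y³ (e^{yθ} − e^{−yθ}) / (e^{−yθ} + e^{yθ})³ p_{θ*}(y) dy ≤ 0 for every θ > 0; in particular M₀ is concave on (0, ∞). -/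
/-!
Writing `1 - 2 q(y; θ) = tanh (y θ)`, the EM map is `M₀ θ = ∫ tanh (y θ) y p(y) dy`. Its
`θ`-derivatives `y² / cosh² (y θ)` and `-2 y³ sinh (y θ) / cosh³ (y θ)` are bounded by `y²` and
`2 |y|³`, which are integrable against the Gaussian mixture, so dominated convergence lets us
differentiate twice under the integral sign. The second derivative integrand is `≤ 0` for `θ > 0`
because `y sinh (y θ) ≥ 0`, and concavity follows from the second-derivative test.
-/

open MeasureTheory Filter Real

namespace Real

theorem hasDerivAt_tanh_s9 (x : ℝ) : HasDerivAt tanh (1 / cosh x ^ 2) x := by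
  have h := (hasDerivAt_sinh x).div (hasDerivAt_cosh x) (cosh_pos x).ne'
  rw [show sinh / cosh = tanh from funext fun x => (tanh_eq_sinh_div_cosh x).symm] at h
  refine h.congr_deriv ?_
  rw [← cosh_sq_sub_sinh_sq x]
  ring

theorem _root_.HasDerivAt.tanh {f : ℝ → ℝ} {f' x : ℝ} (hf : HasDerivAt f f' x) :
    HasDerivAt (fun x => tanh (f x)) (1 / cosh (f x) ^ 2 * f') x :=
  (hasDerivAt_tanh_s9 (f x)).comp x hf

@[fun_prop]
theorem continuous_tanh_s9 : Continuous tanh :=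
  continuous_iff_continuousAt.2 fun x => (hasDerivAt_tanh_s9 x).continuousAt

theorem one_sub_two_div_one_add_exp_two_mul_s9 (x : ℝ) :
    1 - 2 * (1 / (1 + exp (2 * x))) = tanh x := by
  have hx := exp_pos x
  rw [tanh_eq, show 2 * x = x + x by ring, exp_add, exp_neg]
  field_simp
  ring

theorem exp_sub_exp_neg_div_exp_neg_add_exp_pow_three (x : ℝ) :
    (exp x - exp (-x)) / (exp (-x) + exp x) ^ 3 = sinh x / cosh x ^ 3 / 4 := by
  rw [sinh_eq, cosh_eq]
  field_simp
  ring

theorem mul_sinh_mul_nonneg (y : ℝ) {θ : ℝ} (hθ : 0 ≤ θ) : 0 ≤ y * sinh (y * θ) := by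
  rcases le_total 0 y with hy | hy
  · exact mul_nonneg hy (sinh_nonneg_iff.2 (mul_nonneg hy hθ))
  · exact mul_nonneg_of_nonpos_of_nonpos hy
      (sinh_nonpos_iff.2 (mul_nonpos_of_nonpos_of_nonneg hy hθ))

end Real

theorem integrable_abs_pow_mul_exp_neg_sq_sub (n : ℕ) (c : ℝ) :
    Integrable fun y : ℝ => |y| ^ n * exp (-(y - c) ^ 2 / 2) := by
  have hg : Integrable fun y : ℝ => |y ^ n * exp (-(1 / 4) * y ^ 2)| := by
    simpa [rpow_natCast] using (integrable_rpow_mul_exp_neg_mul_sq (b := 1 / 4) (by norm_num)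
      (s := n) (by linarith [n.cast_nonneg (α := ℝ)])).abs
  refine (hg.const_mul (exp (c ^ 2 / 2))).mono' (by fun_prop) (ae_of_all _ fun y => ?_)
  rw [norm_of_nonneg (by positivity), abs_mul, abs_pow, abs_of_pos (exp_pos _), mul_left_comm]
  gcongr
  rw [← exp_add]
  exact exp_le_exp.2 (by nlinarith [sq_nonneg (y / 2 - c)])

theorem integrable_gaussian_mixture_abs_pow_mul (n : ℕ) (θ : ℝ) :
    Integrable fun y : ℝ => |y| ^ n * ((1 / (2 * √(2 * π))) *
      (exp (-(y - θ) ^ 2 / 2) + exp (-(y + θ) ^ 2 / 2))) := by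
  have h := (integrable_abs_pow_mul_exp_neg_sq_sub n θ).add
    (integrable_abs_pow_mul_exp_neg_sq_sub n (-θ))
  simp only [sub_neg_eq_add] at h
  convert h.const_mul (1 / (2 * √(2 * π))) using 2 with y
  rw [Pi.add_apply]
  ring

section DominatedDifferentiation

variable {p : ℝ → ℝ} {C : ℝ} {k : ℕ}

theorem norm_mul_le_of_abs_le_mul_abs_pow {a y py : ℝ} (hpy : 0 ≤ py) (ha : |a| ≤ C * |y| ^ k) :
    ‖a * py‖ ≤ C * (|y| ^ k * py) := by
  rw [norm_mul, norm_of_nonneg hpy, ← mul_assoc]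
  exact mul_le_mul_of_nonneg_right ha hpy

variable (hp : AEStronglyMeasurable p) (hp0 : ∀ y, 0 ≤ p y)
  (hmom : Integrable fun y => |y| ^ k * p y)
include hp hp0 hmom

theorem integrable_mul_of_abs_le_mul_abs_pow {f : ℝ → ℝ} (hf : Continuous f)
    (hfC : ∀ y, |f y| ≤ C * |y| ^ k) : Integrable fun y => f y * p y :=
  (hmom.const_mul C).mono' (hf.aestronglyMeasurable.mul hp)
    (ae_of_all _ fun y => norm_mul_le_of_abs_le_mul_abs_pow (hp0 y) (hfC y))

theorem hasDerivAt_integral_mul_of_abs_deriv_le {f f' : ℝ → ℝ → ℝ}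
    (hf : ∀ θ, Continuous (f θ)) (hf' : ∀ θ, Continuous (f' θ))
    (hderiv : ∀ θ y, HasDerivAt (f · y) (f' θ y) θ) (hf'C : ∀ θ y, |f' θ y| ≤ C * |y| ^ k)
    {θ₀ : ℝ} (hint : Integrable fun y => f θ₀ y * p y) :
    HasDerivAt (fun θ => ∫ y, f θ y * p y) (∫ y, f' θ₀ y * p y) θ₀ :=
  (hasDerivAt_integral_of_dominated_loc_of_deriv_le (F := fun θ y => f θ y * p y)
    (F' := fun θ y => f' θ y * p y)
    (Metric.ball_mem_nhds θ₀ one_pos)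
    (Eventually.of_forall fun θ => (hf θ).aestronglyMeasurable.mul hp) hint
    ((hf' θ₀).aestronglyMeasurable.mul hp)
    (ae_of_all _ fun y θ _ => norm_mul_le_of_abs_le_mul_abs_pow (hp0 y) (hf'C θ y))
    (hmom.const_mul C) (ae_of_all _ fun y θ _ => (hderiv θ y).mul_const (p y))).2

end DominatedDifferentiation

section EMKernel

variable (y θ : ℝ)

theorem hasDerivAt_tanh_mul_mul :
    HasDerivAt (fun t => tanh (y * t) * y) (y ^ 2 / cosh (y * θ) ^ 2) θ :=
  ((hasDerivAt_const_mul (x := θ) y).tanh.mul_const y).congr_deriv (by ring)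

theorem hasDerivAt_sq_div_cosh_mul_sq :
    HasDerivAt (fun t => y ^ 2 / cosh (y * t) ^ 2)
      (-2 * y ^ 3 * sinh (y * θ) / cosh (y * θ) ^ 3) θ := by
  refine ((hasDerivAt_const θ (y ^ 2)).div ((hasDerivAt_const_mul (x := θ) y).cosh.pow 2)
    (pow_ne_zero 2 (cosh_pos _).ne')).congr_deriv ?_
  simp only [Pi.pow_apply]
  field_simp
  ring

theorem abs_tanh_mul_mul_le : |tanh (y * θ) * y| ≤ |y| := by
  rw [abs_mul]
  exact mul_le_of_le_one_left (abs_nonneg y) (abs_tanh_lt_one _).le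

theorem abs_sq_div_cosh_mul_sq_le : |y ^ 2 / cosh (y * θ) ^ 2| ≤ |y| ^ 2 := by
  rw [abs_div, abs_pow, abs_pow, abs_of_pos (cosh_pos _)]
  exact div_le_self (by positivity) (one_le_pow₀ (one_le_cosh _))

theorem abs_neg_two_mul_pow_three_mul_sinh_div_le :
    |-2 * y ^ 3 * sinh (y * θ) / cosh (y * θ) ^ 3| ≤ 2 * |y| ^ 3 := by
  have hsinh : |sinh (y * θ)| ≤ cosh (y * θ) ^ 3 := calc
    |sinh (y * θ)| = sinh |y * θ| := abs_sinh _
    _ ≤ cosh |y * θ| := (sinh_lt_cosh _).le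
    _ = cosh (y * θ) := cosh_abs _
    _ ≤ cosh (y * θ) ^ 3 := le_self_pow₀ (one_le_cosh _) (by norm_num)
  rw [abs_div, abs_mul, abs_mul, abs_pow, abs_pow, abs_of_pos (cosh_pos _), abs_neg, abs_two,
    div_le_iff₀ (by positivity)]
  exact mul_le_mul_of_nonneg_left hsinh (by positivity)

theorem neg_two_mul_pow_three_mul_sinh_div_nonpos {θ : ℝ} (hθ : 0 ≤ θ) :
    -2 * y ^ 3 * sinh (y * θ) / cosh (y * θ) ^ 3 ≤ 0 := by
  have h := mul_sinh_mul_nonneg y hθ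
  have : -2 * y ^ 3 * sinh (y * θ) = -(2 * y ^ 2 * (y * sinh (y * θ))) := by ring
  rw [this, neg_div]
  exact neg_nonpos.2 (by positivity)

end EMKernel

theorem symmetric_gaussian_mixture_em_map_second_derivative_and_concave_general
    (θstar : ℝ)
    (p : ℝ → ℝ)
    (hp : p = fun y => (1 / (2 * Real.sqrt (2 * Real.pi))) *
      (Real.exp (-(y - θstar) ^ 2 / 2) + Real.exp (-(y + θstar) ^ 2 / 2)))
    (q : ℝ → ℝ → ℝ)
    (hq : q = fun θ y => 1 / (1 + Real.exp (2 * y * θ)))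
    (M0 : ℝ → ℝ)
    (hM0 : M0 = fun θ => ∫ y : ℝ, (1 - 2 * q θ y) * y * p y)
    (D2 : ℝ → ℝ)
    (hD2 : D2 = fun θ => -8 * ∫ y : ℝ,
      y ^ 3 * (Real.exp (y * θ) - Real.exp (-(y * θ))) /
        (Real.exp (-(y * θ)) + Real.exp (y * θ)) ^ 3 * p y) :
    (∀ θ : ℝ, 0 < θ → HasDerivAt (deriv M0) (D2 θ) θ ∧ D2 θ ≤ 0) ∧
    ConcaveOn ℝ (Set.Ioi 0) M0 := by
  have hp0 : ∀ y, 0 ≤ p y := fun y => by rw [hp]; positivity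
  have hpm : AEStronglyMeasurable p := by rw [hp]; fun_prop
  have hmom (n : ℕ) : Integrable fun y => |y| ^ n * p y :=
    hp ▸ integrable_gaussian_mixture_abs_pow_mul n θstar
  have hM0_eq : M0 = fun θ => ∫ y, tanh (y * θ) * y * p y := by
    simp only [hM0, hq]
    congr! 3 with θ y
    rw [mul_assoc 2 y θ, one_sub_two_div_one_add_exp_two_mul_s9]
  have hD2_eq : D2 = fun θ => ∫ y, -2 * y ^ 3 * sinh (y * θ) / cosh (y * θ) ^ 3 * p y := by
    funext θ
    simp only [hD2, ← integral_const_mul]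
    congr 1 with y
    rw [mul_div_assoc, exp_sub_exp_neg_div_exp_neg_add_exp_pow_three]
    ring
  have hcont₁ (θ : ℝ) : Continuous fun y => y ^ 2 / cosh (y * θ) ^ 2 := by
    fun_prop (disch := intro; positivity)
  have hcont₂ (θ : ℝ) : Continuous fun y => -2 * y ^ 3 * sinh (y * θ) / cosh (y * θ) ^ 3 := by
    fun_prop (disch := intro; positivity)
  have hM1 (θ : ℝ) : HasDerivAt M0 (∫ y, y ^ 2 / cosh (y * θ) ^ 2 * p y) θ :=
    hM0_eq ▸ hasDerivAt_integral_mul_of_abs_deriv_le (C := 1) hpm hp0 (hmom 2) (by fun_prop)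
      hcont₁ (fun θ y => hasDerivAt_tanh_mul_mul y θ)
      (fun θ y => by simpa using abs_sq_div_cosh_mul_sq_le y θ)
      (integrable_mul_of_abs_le_mul_abs_pow (C := 1) hpm hp0 (hmom 1) (by fun_prop)
        fun y => by simpa using abs_tanh_mul_mul_le y θ)
  have hM2 (θ : ℝ) : HasDerivAt (fun θ => ∫ y, y ^ 2 / cosh (y * θ) ^ 2 * p y) (D2 θ) θ :=
    hD2_eq ▸ hasDerivAt_integral_mul_of_abs_deriv_le hpm hp0 (hmom 3) hcont₁ hcont₂
      (fun θ y => hasDerivAt_sq_div_cosh_mul_sq y θ)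
      (fun θ y => abs_neg_two_mul_pow_three_mul_sinh_div_le y θ)
      (integrable_mul_of_abs_le_mul_abs_pow (C := 1) hpm hp0 (hmom 2) (hcont₁ θ)
        fun y => by simpa using abs_sq_div_cosh_mul_sq_le y θ)
  have hD2_nonpos (θ : ℝ) (hθ : 0 < θ) : D2 θ ≤ 0 :=
    hD2_eq ▸ integral_nonpos fun y =>
      mul_nonpos_of_nonpos_of_nonneg (neg_two_mul_pow_three_mul_sinh_div_nonpos y hθ.le) (hp0 y)
  have hderiv : deriv M0 = fun θ => ∫ y, y ^ 2 / cosh (y * θ) ^ 2 * p y :=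
    funext fun θ => (hM1 θ).deriv
  refine ⟨fun θ hθ => ⟨hderiv ▸ hM2 θ, hD2_nonpos θ hθ⟩, ?_⟩
  refine concaveOn_of_hasDerivWithinAt2_nonpos (convex_Ioi 0)
    (fun θ _ => (hM1 θ).continuousAt.continuousWithinAt) (fun θ _ => (hM1 θ).hasDerivWithinAt)
    (fun θ _ => (hM2 θ).hasDerivWithinAt) ?_
  rw [interior_Ioi]
  exact hD2_nonpos

/-- the unsupervised population EM map `M₀` of the symmetric
two-component Gaussian mixture is twice differentiable on `(0, ∞)` with the
stated nonpositive second derivative; in particular it is concave on `(0, ∞)`. -/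
theorem symmetric_gaussian_mixture_em_map_second_derivative_and_concave
    (θstar : ℝ) (hθstar : 0 < θstar)
    (p : ℝ → ℝ)
    (hp : p = fun y => (1 / (2 * Real.sqrt (2 * Real.pi))) *
      (Real.exp (-(y - θstar) ^ 2 / 2) + Real.exp (-(y + θstar) ^ 2 / 2)))
    (q : ℝ → ℝ → ℝ)
    (hq : q = fun θ y => 1 / (1 + Real.exp (2 * y * θ)))
    (M0 : ℝ → ℝ)
    (hM0 : M0 = fun θ => ∫ y : ℝ, (1 - 2 * q θ y) * y * p y)
    (D2 : ℝ → ℝ)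
    (hD2 : D2 = fun θ => -8 * ∫ y : ℝ,
      y ^ 3 * (Real.exp (y * θ) - Real.exp (-(y * θ))) /
        (Real.exp (-(y * θ)) + Real.exp (y * θ)) ^ 3 * p y) :
    (∀ θ : ℝ, 0 < θ → HasDerivAt (deriv M0) (D2 θ) θ ∧ D2 θ ≤ 0) ∧
    ConcaveOn ℝ (Set.Ioi 0) M0 :=
  symmetric_gaussian_mixture_em_map_second_derivative_and_concave_general θstar p hp q hq M0 hM0 D2
    hD2
end

section
/- Let θ* > 2 and 0 ≤ γ < 1. Let p_{θ*}(y) = (1/(2√(2π)))(e^{−(y−θ*)²/2} + e^{−(y+θ*)²/2}), q(y;θ) = 1/(1 + e^{2yθ}), M₀(θ) = ∫ (1 − 2q(y;θ)) y p_{θ*}(y) dy, and M_γ(θ) = γθ* + (1−γ) M₀(θ). Then for every θ > θ*: |M_γ(θ) − θ*| ≤ (1−γ) · 4·( e^{−9θ*²/32}/(θ*² e²) + (θ*²/16) e^{−θ*²/2} ) · |θ − θ*|. -/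
open MeasureTheory Real

noncomputable def fEM (t : ℝ) : ℝ := 1 - 2 / (1 + Real.exp (2 * t))

lemma fEM_mono {a b : ℝ} (hab : a ≤ b) : fEM a ≤ fEM b := by
  unfold fEM
  have h1 : (0:ℝ) < 1 + Real.exp (2 * a) := by positivity
  have h2 : (0:ℝ) < 1 + Real.exp (2 * b) := by positivity
  have : 2 / (1 + Real.exp (2 * b)) ≤ 2 / (1 + Real.exp (2 * a)) := by
    gcongr
  linarith

lemma fEM_abs_le (t : ℝ) : |fEM t| ≤ 1 := by
  unfold fEM
  have h1 : (0:ℝ) < 1 + Real.exp (2 * t) := by positivity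
  have h2 : 2 / (1 + Real.exp (2 * t)) ≤ 2 := by
    rw [div_le_iff₀ h1]; nlinarith [Real.exp_pos (2*t)]
  have h3 : 0 < 2 / (1 + Real.exp (2 * t)) := by positivity
  rw [abs_le]; constructor <;> linarith

lemma fEM_odd (t : ℝ) : fEM (-t) = - fEM t := by
  unfold fEM
  have h1 : (0:ℝ) < 1 + Real.exp (2 * t) := by positivity
  have h2 : (0:ℝ) < 1 + Real.exp (2 * -t) := by positivity
  have key : Real.exp (-(2 * t)) * Real.exp (2 * t) = 1 := by
    rw [← Real.exp_add]; ring_nf; exact Real.exp_zero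
  have h2' : (0:ℝ) < 1 + Real.exp (-(2 * t)) := by positivity
  rw [show (2:ℝ) * -t = -(2*t) by ring]
  field_simp
  nlinarith [key, sq_nonneg (Real.exp (2*t))]

lemma fEM_slope {a b : ℝ} (hba : b ≤ a) :
    fEM a - fEM b ≤ 4 * (a - b) * Real.exp (-(2 * b)) := by
  have hA : (0:ℝ) < Real.exp (2 * a) := Real.exp_pos _
  have hB : (0:ℝ) < Real.exp (2 * b) := Real.exp_pos _
  have hkey : Real.exp (2 * a) * (1 + (2 * b - 2 * a)) ≤ Real.exp (2 * b) := by
    have h := Real.add_one_le_exp (2 * b - 2 * a)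
    have := mul_le_mul_of_nonneg_left h hA.le
    calc Real.exp (2*a) * (1 + (2*b - 2*a)) = Real.exp (2*a) * ((2*b-2*a) + 1) := by ring
    _ ≤ Real.exp (2*a) * Real.exp (2*b - 2*a) := this
    _ = Real.exp (2*b) := by rw [← Real.exp_add]; ring_nf
  have hfa : fEM a - fEM b =
      2 * (Real.exp (2*a) - Real.exp (2*b)) / ((1 + Real.exp (2*a)) * (1 + Real.exp (2*b))) := by
    unfold fEM
    have h1 : (0:ℝ) < 1 + Real.exp (2 * a) := by positivity
    have h2 : (0:ℝ) < 1 + Real.exp (2 * b) := by positivity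
    field_simp
    ring
  rw [hfa, Real.exp_neg]
  have h1 : (0:ℝ) < 1 + Real.exp (2 * a) := by positivity
  have h2 : (0:ℝ) < 1 + Real.exp (2 * b) := by positivity
  rw [div_le_iff₀ (by positivity)]
  have hinv : Real.exp (2*b) * (Real.exp (2*b))⁻¹ = 1 := mul_inv_cancel₀ hB.ne'
  nlinarith [mul_pos hA hB, mul_nonneg (sub_nonneg.2 hba) hA.le,
    mul_le_mul_of_nonneg_left hkey (le_of_lt (by positivity : (0:ℝ) < (Real.exp (2*b))⁻¹)),
    inv_pos.2 hB]


lemma aux_sq_exp (s : ℝ) (hs : 0 ≤ s) : s ^ 2 * Real.exp (-s) ≤ 4 * Real.exp (-2) := by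
  have h : s / 2 ≤ Real.exp (s / 2 - 1) := by
    have := Real.add_one_le_exp (s / 2 - 1); linarith
  have h2 : (s / 2) ^ 2 ≤ Real.exp (s / 2 - 1) ^ 2 := by
    have := mul_self_le_mul_self (by linarith) h
    simpa [pow_two] using this
  have h3 : Real.exp (s / 2 - 1) ^ 2 = Real.exp (s - 2) := by
    rw [← Real.exp_nat_mul]; ring_nf
  rw [h3] at h2
  have h4 : Real.exp (s - 2) * Real.exp (-s) = Real.exp (-2) := by
    rw [← Real.exp_add]; ring_nf
  nlinarith [Real.exp_pos (-s), mul_le_mul_of_nonneg_right h2 (Real.exp_pos (-s)).le]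


lemma integrable_gauss2 : Integrable fun y : ℝ => Real.exp (-y ^ 2 / 2) := by
  have h := integrable_exp_neg_mul_sq (show (0:ℝ) < 2⁻¹ by norm_num)
  refine h.congr ?_
  filter_upwards with y
  ring_nf

lemma integral_gauss2 : (∫ y : ℝ, Real.exp (-y ^ 2 / 2)) = Real.sqrt (2 * π) := by
  have h := integral_gaussian (2⁻¹ : ℝ)
  rw [show π / (2⁻¹ : ℝ) = 2 * π by field_simp] at h
  rw [← h]
  congr 1; funext y; ring_nf

lemma integrable_abs_mul_gauss4 : Integrable fun y : ℝ => |y| * Real.exp (-(4:ℝ)⁻¹ * y ^ 2) := by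
  have h := (integrable_mul_exp_neg_mul_sq (show (0:ℝ) < 4⁻¹ by norm_num)).abs
  refine h.congr ?_
  filter_upwards with y
  rw [abs_mul, abs_of_pos (Real.exp_pos _)]

lemma integrable_mul_gauss_shift (m : ℝ) :
    Integrable fun y : ℝ => y * Real.exp (-(y - m) ^ 2 / 2) := by
  refine Integrable.mono' (g := fun y => Real.exp (m ^ 2 / 2) * (|y| * Real.exp (-(4:ℝ)⁻¹ * y ^ 2)))
    (integrable_abs_mul_gauss4.const_mul _) ?_ ?_
  · exact (continuous_id.mul (by continuity)).aestronglyMeasurable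
  · filter_upwards with y
    rw [Real.norm_eq_abs, abs_mul, abs_of_pos (Real.exp_pos _)]
    have hexp : Real.exp (-(y - m) ^ 2 / 2) ≤ Real.exp (m ^ 2 / 2) * Real.exp (-(4:ℝ)⁻¹ * y ^ 2) := by
      rw [← Real.exp_add]
      apply Real.exp_le_exp.2
      nlinarith [sq_nonneg (y / 2 - m)]
    calc |y| * Real.exp (-(y - m) ^ 2 / 2)
        ≤ |y| * (Real.exp (m ^ 2 / 2) * Real.exp (-(4:ℝ)⁻¹ * y ^ 2)) := by
          apply mul_le_mul_of_nonneg_left hexp (abs_nonneg y)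
      _ = Real.exp (m ^ 2 / 2) * (|y| * Real.exp (-(4:ℝ)⁻¹ * y ^ 2)) := by ring

lemma integrable_mul_gauss2 : Integrable fun u : ℝ => u * Real.exp (-u ^ 2 / 2) := by
  simpa using integrable_mul_gauss_shift 0

lemma integral_mul_gauss2 : (∫ u : ℝ, u * Real.exp (-u ^ 2 / 2)) = 0 := by
  have h := integral_neg_eq_self (fun u : ℝ => u * Real.exp (-u ^ 2 / 2)) volume
  have h2 : (∫ u : ℝ, -u * Real.exp (-(-u) ^ 2 / 2)) = ∫ u : ℝ, -(u * Real.exp (-u ^ 2 / 2)) := by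
    congr 1; funext u; ring_nf
  rw [h2] at h
  rw [integral_neg] at h
  linarith

lemma integral_mul_gauss_shift (m : ℝ) :
    (∫ y : ℝ, y * Real.exp (-(y - m) ^ 2 / 2)) = m * Real.sqrt (2 * π) := by
  have step1 : (∫ y : ℝ, y * Real.exp (-(y - m) ^ 2 / 2))
      = ∫ y : ℝ, (fun u => (u + m) * Real.exp (-u ^ 2 / 2)) (y - m) := by
    congr 1; funext y; simp only [sub_add_cancel]
  rw [step1, integral_sub_right_eq_self (fun u => (u + m) * Real.exp (-u ^ 2 / 2)) m]
  have step2 : (∫ u : ℝ, (u + m) * Real.exp (-u ^ 2 / 2))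
      = (∫ u : ℝ, u * Real.exp (-u ^ 2 / 2)) + ∫ u : ℝ, m * Real.exp (-u ^ 2 / 2) := by
    rw [← integral_add integrable_mul_gauss2 (integrable_gauss2.const_mul m)]
    congr 1; funext u; ring
  rw [step2, integral_mul_gauss2, integral_const_mul, integral_gauss2, zero_add]





lemma key_nn {c θ : ℝ} (hc : 0 ≤ c) (hθ : c ≤ θ) {y : ℝ} (hy : 0 ≤ y) :
    0 ≤ (fEM (y * θ) - fEM (y * c)) * y ∧
    (fEM (y * θ) - fEM (y * c)) * y ≤ 4 * (θ - c) * (y ^ 2 * Real.exp (-(2 * (y * c)))) := by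
  constructor
  · exact mul_nonneg (sub_nonneg.2 (fEM_mono (by nlinarith))) hy
  · have h := fEM_slope (show y * c ≤ y * θ by nlinarith)
    have h2 := mul_le_mul_of_nonneg_right h hy
    nlinarith [Real.exp_pos (-(2 * (y * c)))]

lemma key_all {c θ : ℝ} (hc : 0 ≤ c) (hθ : c ≤ θ) (y : ℝ) :
    0 ≤ (fEM (y * θ) - fEM (y * c)) * y ∧
    (fEM (y * θ) - fEM (y * c)) * y ≤ 4 * (θ - c) * (y ^ 2 * Real.exp (-(2 * (|y| * c)))) := by
  rcases le_total 0 y with hy | hy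
  · rw [abs_of_nonneg hy]; exact key_nn hc hθ hy
  · have hy' : 0 ≤ -y := by linarith
    have e1 : fEM (y * θ) = - fEM (-y * θ) := by rw [show y * θ = -(-y * θ) by ring, fEM_odd]
    have e2 : fEM (y * c) = - fEM (-y * c) := by rw [show y * c = -(-y * c) by ring, fEM_odd]
    obtain ⟨k1, k2⟩ := key_nn hc hθ hy'
    rw [abs_of_nonpos hy]
    constructor
    · calc (0:ℝ) ≤ (fEM (-y * θ) - fEM (-y * c)) * (-y) := k1
        _ = (fEM (y * θ) - fEM (y * c)) * y := by rw [e1, e2]; ring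
    · calc (fEM (y * θ) - fEM (y * c)) * y = (fEM (-y * θ) - fEM (-y * c)) * (-y) := by
            rw [e1, e2]; ring
        _ ≤ 4 * (θ - c) * ((-y) ^ 2 * Real.exp (-(2 * (-y * c)))) := k2
        _ = 4 * (θ - c) * (y ^ 2 * Real.exp (-(2 * (-y * c)))) := by ring_nf

lemma gauss_dom {c : ℝ} (hc : 0 ≤ c) (y : ℝ) :
    Real.exp (-(2 * (|y| * c))) * (Real.exp (-(y - c) ^ 2 / 2) + Real.exp (-(y + c) ^ 2 / 2))
      ≤ 2 * (Real.exp (-(c ^ 2 / 2)) * (Real.exp (-(c * |y|)) * Real.exp (-y ^ 2 / 2))) := by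
  have key : ∀ u : ℝ, -(2 * (|y| * c)) + -(y - u) ^ 2 / 2 ≤ -(c ^ 2 / 2) + (-(c * |y|) + -y ^ 2 / 2)
      → Real.exp (-(2 * (|y| * c))) * Real.exp (-(y - u) ^ 2 / 2)
        ≤ Real.exp (-(c ^ 2 / 2)) * (Real.exp (-(c * |y|)) * Real.exp (-y ^ 2 / 2)) := by
    intro u hu
    rw [← Real.exp_add, ← Real.exp_add, ← Real.exp_add]
    exact Real.exp_le_exp.2 hu
  have h1 : Real.exp (-(2 * (|y| * c))) * Real.exp (-(y - c) ^ 2 / 2)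
      ≤ Real.exp (-(c ^ 2 / 2)) * (Real.exp (-(c * |y|)) * Real.exp (-y ^ 2 / 2)) := by
    apply key c
    rcases le_total 0 y with hy | hy
    · rw [abs_of_nonneg hy]; nlinarith
    · rw [abs_of_nonpos hy]; nlinarith [mul_nonneg (neg_nonneg.2 hy) hc]
  have h2 : Real.exp (-(2 * (|y| * c))) * Real.exp (-(y + c) ^ 2 / 2)
      ≤ Real.exp (-(c ^ 2 / 2)) * (Real.exp (-(c * |y|)) * Real.exp (-y ^ 2 / 2)) := by
    have : -(y + c) ^ 2 / 2 = -(y - -c) ^ 2 / 2 := by ring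
    rw [this]
    apply key (-c)
    rcases le_total 0 y with hy | hy
    · rw [abs_of_nonneg hy]; nlinarith [mul_nonneg hy hc]
    · rw [abs_of_nonpos hy]; nlinarith [mul_nonneg (neg_nonneg.2 hy) hc]
  calc Real.exp (-(2 * (|y| * c))) * (Real.exp (-(y - c) ^ 2 / 2) + Real.exp (-(y + c) ^ 2 / 2))
      = Real.exp (-(2 * (|y| * c))) * Real.exp (-(y - c) ^ 2 / 2)
        + Real.exp (-(2 * (|y| * c))) * Real.exp (-(y + c) ^ 2 / 2) := by ring
    _ ≤ _ := by linarith

lemma sup_bound {c : ℝ} (hc : 0 < c) (y : ℝ) :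
    y ^ 2 * Real.exp (-(c * |y|)) ≤ 4 / (c ^ 2 * Real.exp 1 ^ 2) := by
  have h := aux_sq_exp (c * |y|) (by positivity)
  have habs : (c * |y|) ^ 2 = c ^ 2 * y ^ 2 := by rw [mul_pow, sq_abs]
  have he : Real.exp (-2) * Real.exp 1 ^ 2 = 1 := by
    rw [← Real.exp_nat_mul, ← Real.exp_add]; norm_num
  rw [le_div_iff₀ (by positivity)]
  have hepos : (0:ℝ) < Real.exp 1 ^ 2 := by positivity
  rw [habs] at h
  nlinarith [mul_le_mul_of_nonneg_right h hepos.le]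





lemma gauss_quarter (m y : ℝ) :
    Real.exp (-(y - m) ^ 2 / 2) ≤ Real.exp (m ^ 2 / 2) * Real.exp (-(4:ℝ)⁻¹ * y ^ 2) := by
  rw [← Real.exp_add]
  exact Real.exp_le_exp.2 (by nlinarith [sq_nonneg (y / 2 - m)])

lemma fEM_cont : Continuous fEM := by
  unfold fEM
  refine continuous_const.sub (Continuous.div continuous_const (by continuity) ?_)
  intro t; positivity

lemma integrable_hEM (c t : ℝ) :
    Integrable fun y : ℝ => fEM (y * t) * y * ((1 / (2 * Real.sqrt (2 * π))) *
      (Real.exp (-(y - c) ^ 2 / 2) + Real.exp (-(y + c) ^ 2 / 2))) := by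
  set C : ℝ := 1 / (2 * Real.sqrt (2 * π)) with hC
  have hC0 : 0 ≤ C := by positivity
  refine Integrable.mono'
    (g := fun y => (2 * C * Real.exp (c ^ 2 / 2)) * (|y| * Real.exp (-(4:ℝ)⁻¹ * y ^ 2)))
    (integrable_abs_mul_gauss4.const_mul _) ?_ ?_
  · exact (((fEM_cont.comp (continuous_id.mul continuous_const)).mul continuous_id).mul
      (by continuity)).aestronglyMeasurable
  · filter_upwards with y
    have hE1 := gauss_quarter c y
    have hE2 : Real.exp (-(y + c) ^ 2 / 2) ≤ Real.exp (c ^ 2 / 2) * Real.exp (-(4:ℝ)⁻¹ * y ^ 2) := by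
      have := gauss_quarter (-c) y
      rw [show -(y - -c) ^ 2 / 2 = -(y + c) ^ 2 / 2 by ring] at this
      rw [show ((-c) ^ 2 : ℝ) / 2 = c ^ 2 / 2 by ring] at this
      exact this
    have hEpos1 := (Real.exp_pos (-(y - c) ^ 2 / 2)).le
    have hEpos2 := (Real.exp_pos (-(y + c) ^ 2 / 2)).le
    rw [Real.norm_eq_abs, abs_mul, abs_mul]
    have habs : |C * (Real.exp (-(y - c) ^ 2 / 2) + Real.exp (-(y + c) ^ 2 / 2))|
        = C * (Real.exp (-(y - c) ^ 2 / 2) + Real.exp (-(y + c) ^ 2 / 2)) := by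
      rw [abs_of_nonneg (by positivity)]
    rw [habs]
    calc |fEM (y * t)| * |y| * (C * (Real.exp (-(y - c) ^ 2 / 2) + Real.exp (-(y + c) ^ 2 / 2)))
        ≤ 1 * |y| * (C * (Real.exp (-(y - c) ^ 2 / 2) + Real.exp (-(y + c) ^ 2 / 2))) := by
          apply mul_le_mul_of_nonneg_right (mul_le_mul_of_nonneg_right (fEM_abs_le _) (abs_nonneg y))
          positivity
      _ ≤ 1 * |y| * (C * (Real.exp (c ^ 2 / 2) * Real.exp (-(4:ℝ)⁻¹ * y ^ 2)
            + Real.exp (c ^ 2 / 2) * Real.exp (-(4:ℝ)⁻¹ * y ^ 2))) := by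
          apply mul_le_mul_of_nonneg_left _ (by positivity)
          apply mul_le_mul_of_nonneg_left _ hC0
          exact add_le_add hE1 hE2
      _ = (2 * C * Real.exp (c ^ 2 / 2)) * (|y| * Real.exp (-(4:ℝ)⁻¹ * y ^ 2)) := by ring





lemma fEM_mul_mix (c y : ℝ) :
    fEM (y * c) * (Real.exp (-(y - c) ^ 2 / 2) + Real.exp (-(y + c) ^ 2 / 2))
      = Real.exp (-(y - c) ^ 2 / 2) - Real.exp (-(y + c) ^ 2 / 2) := by
  have hX : Real.exp (-(y - c) ^ 2 / 2) = Real.exp (2 * (y * c)) * Real.exp (-(y + c) ^ 2 / 2) := by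
    rw [← Real.exp_add]; congr 1; ring
  have hpos : (0:ℝ) < 1 + Real.exp (2 * (y * c)) := by positivity
  unfold fEM
  rw [hX]
  field_simp
  ring

lemma fixed_point {c : ℝ} (hc : 0 < c) :
    (∫ y : ℝ, fEM (y * c) * y * ((1 / (2 * Real.sqrt (2 * π))) *
      (Real.exp (-(y - c) ^ 2 / 2) + Real.exp (-(y + c) ^ 2 / 2)))) = c := by
  have hrw : (fun y : ℝ => fEM (y * c) * y * ((1 / (2 * Real.sqrt (2 * π))) *
      (Real.exp (-(y - c) ^ 2 / 2) + Real.exp (-(y + c) ^ 2 / 2))))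
      = fun y : ℝ => (1 / (2 * Real.sqrt (2 * π))) *
        (y * Real.exp (-(y - c) ^ 2 / 2) - y * Real.exp (-(y - -c) ^ 2 / 2)) := by
    funext y
    have h := fEM_mul_mix c y
    have h2 : -(y - -c) ^ 2 / 2 = -(y + c) ^ 2 / 2 := by ring
    rw [h2]
    calc fEM (y * c) * y * ((1 / (2 * Real.sqrt (2 * π))) *
        (Real.exp (-(y - c) ^ 2 / 2) + Real.exp (-(y + c) ^ 2 / 2)))
        = (1 / (2 * Real.sqrt (2 * π))) * (y *
          (fEM (y * c) * (Real.exp (-(y - c) ^ 2 / 2) + Real.exp (-(y + c) ^ 2 / 2)))) := by ring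
      _ = _ := by rw [h]; ring
  rw [hrw, integral_const_mul, integral_sub (integrable_mul_gauss_shift c)
    (integrable_mul_gauss_shift (-c)), integral_mul_gauss_shift, integral_mul_gauss_shift]
  have hs : (0:ℝ) < Real.sqrt (2 * π) := Real.sqrt_pos.2 (by positivity)
  field_simp
  ring

/-- Theorem 3, item 2, explicit constant: for the symmetric
two-component Gaussian mixture with `θstar > 2`, the semi-supervised population
EM map `Mγ` contracts from any `θ > θstar` with coefficient
`(1−γ)·4·(e^{−9θstar²/32}/(θstar² e²) + (θstar²/16) e^{−θstar²/2})`. -/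
theorem symmetric_gaussian_mixture_em_global_convergence_item2
    (γ θstar : ℝ) (hθstar : 2 < θstar) (hγ0 : 0 ≤ γ) (hγ1 : γ < 1)
    (p : ℝ → ℝ)
    (hp : p = fun y => (1 / (2 * Real.sqrt (2 * Real.pi))) *
      (Real.exp (-(y - θstar) ^ 2 / 2) + Real.exp (-(y + θstar) ^ 2 / 2)))
    (q : ℝ → ℝ → ℝ)
    (hq : q = fun θ y => 1 / (1 + Real.exp (2 * y * θ)))
    (M0 : ℝ → ℝ)
    (hM0 : M0 = fun θ => ∫ y : ℝ, (1 - 2 * q θ y) * y * p y)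
    (Mγ : ℝ → ℝ)
    (hMγ : Mγ = fun θ => γ * θstar + (1 - γ) * M0 θ) :
    ∀ θ > θstar,
      |Mγ θ - θstar| ≤
        (1 - γ) * (4 * (Real.exp (-(9 * θstar ^ 2 / 32)) / (θstar ^ 2 * Real.exp 1 ^ 2)
          + (θstar ^ 2 / 16) * Real.exp (-(θstar ^ 2 / 2)))) * |θ - θstar| := by
  intro θ hθ
  have hc0 : (0:ℝ) < θstar := by linarith
  have hθc : θstar ≤ θ := le_of_lt hθ
  subst hp hq hM0 hMγ
  dsimp only
  set pp : ℝ → ℝ := fun y => (1 / (2 * Real.sqrt (2 * Real.pi))) *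
    (Real.exp (-(y - θstar) ^ 2 / 2) + Real.exp (-(y + θstar) ^ 2 / 2)) with hpp
  have hppnn : ∀ y, 0 ≤ pp y := fun y => by rw [hpp]; positivity
  -- rewrite integrand
  have hM0eq : ∀ t : ℝ,
      (∫ y : ℝ, (1 - 2 * (1 / (1 + Real.exp (2 * y * t)))) * y * pp y)
        = ∫ y : ℝ, fEM (y * t) * y * pp y := by
    intro t
    congr 1
    funext y
    rw [show (1 : ℝ) - 2 * (1 / (1 + Real.exp (2 * y * t))) = fEM (y * t) by
      unfold fEM; rw [mul_one_div, ← mul_assoc]]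
  rw [hM0eq θ]
  have hIθ : Integrable (fun y : ℝ => fEM (y * θ) * y * pp y) := integrable_hEM θstar θ
  have hIc : Integrable (fun y : ℝ => fEM (y * θstar) * y * pp y) := integrable_hEM θstar θstar
  have hfix : (∫ y : ℝ, fEM (y * θstar) * y * pp y) = θstar := fixed_point hc0
  -- the difference integral
  have hsub : (∫ y : ℝ, fEM (y * θ) * y * pp y) - θstar
      = ∫ y : ℝ, (fEM (y * θ) * y * pp y - fEM (y * θstar) * y * pp y) := by
    rw [integral_sub hIθ hIc, hfix]
  have hnn : 0 ≤ ∫ y : ℝ, (fEM (y * θ) * y * pp y - fEM (y * θstar) * y * pp y) := by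
    apply integral_nonneg
    intro y
    simp only [Pi.zero_apply]
    have k := (key_all hc0.le hθc y).1
    have hp0 := hppnn y
    nlinarith [mul_nonneg k hp0]
  set K : ℝ := (θ - θstar) * (16 / (θstar ^ 2 * Real.exp 1 ^ 2)) *
      Real.exp (-(θstar ^ 2 / 2)) / Real.sqrt (2 * π) with hK
  have hpt : ∀ y : ℝ, fEM (y * θ) * y * pp y - fEM (y * θstar) * y * pp y
      ≤ K * Real.exp (-y ^ 2 / 2) := by
    intro y
    have k2 := (key_all hc0.le hθc y).2
    have hp0 := hppnn y
    have hCpos : (0:ℝ) < 1 / (2 * Real.sqrt (2 * Real.pi)) := by positivity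
    have step1 : fEM (y * θ) * y * pp y - fEM (y * θstar) * y * pp y
        = ((fEM (y * θ) - fEM (y * θstar)) * y) * pp y := by ring
    have step2 : ((fEM (y * θ) - fEM (y * θstar)) * y) * pp y
        ≤ (4 * (θ - θstar) * (y ^ 2 * Real.exp (-(2 * (|y| * θstar))))) * pp y :=
      mul_le_mul_of_nonneg_right k2 hp0
    have step3 : (4 * (θ - θstar) * (y ^ 2 * Real.exp (-(2 * (|y| * θstar))))) * pp y
        = (4 * (θ - θstar) * (1 / (2 * Real.sqrt (2 * Real.pi))) * y ^ 2) *
          (Real.exp (-(2 * (|y| * θstar))) *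
            (Real.exp (-(y - θstar) ^ 2 / 2) + Real.exp (-(y + θstar) ^ 2 / 2))) := by
      rw [hpp]; ring
    have step4 : (4 * (θ - θstar) * (1 / (2 * Real.sqrt (2 * Real.pi))) * y ^ 2) *
          (Real.exp (-(2 * (|y| * θstar))) *
            (Real.exp (-(y - θstar) ^ 2 / 2) + Real.exp (-(y + θstar) ^ 2 / 2)))
        ≤ (4 * (θ - θstar) * (1 / (2 * Real.sqrt (2 * Real.pi))) * y ^ 2) *
          (2 * (Real.exp (-(θstar ^ 2 / 2)) * (Real.exp (-(θstar * |y|)) * Real.exp (-y ^ 2 / 2)))) := by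
      apply mul_le_mul_of_nonneg_left (gauss_dom hc0.le y)
      have h1 : (0:ℝ) ≤ θ - θstar := by linarith
      positivity
    have step5 : (4 * (θ - θstar) * (1 / (2 * Real.sqrt (2 * Real.pi))) * y ^ 2) *
          (2 * (Real.exp (-(θstar ^ 2 / 2)) * (Real.exp (-(θstar * |y|)) * Real.exp (-y ^ 2 / 2))))
        = (8 * (θ - θstar) * (1 / (2 * Real.sqrt (2 * Real.pi))) * Real.exp (-(θstar ^ 2 / 2))
            * Real.exp (-y ^ 2 / 2)) * (y ^ 2 * Real.exp (-(θstar * |y|))) := by ring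
    have step6 : (8 * (θ - θstar) * (1 / (2 * Real.sqrt (2 * Real.pi))) * Real.exp (-(θstar ^ 2 / 2))
            * Real.exp (-y ^ 2 / 2)) * (y ^ 2 * Real.exp (-(θstar * |y|)))
        ≤ (8 * (θ - θstar) * (1 / (2 * Real.sqrt (2 * Real.pi))) * Real.exp (-(θstar ^ 2 / 2))
            * Real.exp (-y ^ 2 / 2)) * (4 / (θstar ^ 2 * Real.exp 1 ^ 2)) := by
      apply mul_le_mul_of_nonneg_left (sup_bound hc0 y)
      have h1 : (0:ℝ) ≤ θ - θstar := by linarith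
      positivity
    have step7 : (8 * (θ - θstar) * (1 / (2 * Real.sqrt (2 * Real.pi))) * Real.exp (-(θstar ^ 2 / 2))
            * Real.exp (-y ^ 2 / 2)) * (4 / (θstar ^ 2 * Real.exp 1 ^ 2))
        = K * Real.exp (-y ^ 2 / 2) := by
      rw [hK]; ring
    linarith [step2, step3 ▸ step2, step4, step5 ▸ step4, step6, step7 ▸ step6, step1]
  have hub : (∫ y : ℝ, (fEM (y * θ) * y * pp y - fEM (y * θstar) * y * pp y))
      ≤ (θ - θstar) * (16 / (θstar ^ 2 * Real.exp 1 ^ 2)) * Real.exp (-(θstar ^ 2 / 2)) := by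
    have hmono := integral_mono (hIθ.sub hIc) (integrable_gauss2.const_mul K) hpt
    rw [integral_const_mul, integral_gauss2] at hmono
    have hs : (0:ℝ) < Real.sqrt (2 * π) := Real.sqrt_pos.2 (by positivity)
    calc (∫ y : ℝ, (fEM (y * θ) * y * pp y - fEM (y * θstar) * y * pp y))
        ≤ K * Real.sqrt (2 * π) := hmono
      _ = (θ - θstar) * (16 / (θstar ^ 2 * Real.exp 1 ^ 2)) * Real.exp (-(θstar ^ 2 / 2)) := by
        rw [hK]; field_simp
  -- final arithmetic
  set D : ℝ := ∫ y : ℝ, (fEM (y * θ) * y * pp y - fEM (y * θstar) * y * pp y) with hD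
  have hIval : (∫ y : ℝ, fEM (y * θ) * y * pp y) = θstar + D := by
    linarith [hsub]
  rw [hIval]
  have habs1 : |γ * θstar + (1 - γ) * (θstar + D) - θstar| = (1 - γ) * D := by
    rw [show γ * θstar + (1 - γ) * (θstar + D) - θstar = (1 - γ) * D by ring]
    exact abs_of_nonneg (mul_nonneg (by linarith) hnn)
  rw [habs1, abs_of_pos (by linarith : (0:ℝ) < θ - θstar)]
  have he2 : (4:ℝ) ≤ Real.exp 1 ^ 2 := by nlinarith [Real.add_one_le_exp 1]
  have hc2 : (4:ℝ) ≤ θstar ^ 2 := by nlinarith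
  have h64 : 16 / (θstar ^ 2 * Real.exp 1 ^ 2) ≤ θstar ^ 2 / 4 := by
    rw [div_le_div_iff₀ (by positivity) (by norm_num)]
    nlinarith [mul_le_mul hc2 he2 (by norm_num) (by nlinarith)]
  have hcoef : (16 / (θstar ^ 2 * Real.exp 1 ^ 2)) * Real.exp (-(θstar ^ 2 / 2))
      ≤ 4 * (Real.exp (-(9 * θstar ^ 2 / 32)) / (θstar ^ 2 * Real.exp 1 ^ 2)
          + (θstar ^ 2 / 16) * Real.exp (-(θstar ^ 2 / 2))) := by
    have hA : (0:ℝ) ≤ Real.exp (-(9 * θstar ^ 2 / 32)) / (θstar ^ 2 * Real.exp 1 ^ 2) := by positivity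
    have hB := mul_le_mul_of_nonneg_right h64 (Real.exp_pos (-(θstar ^ 2 / 2))).le
    nlinarith
  calc (1 - γ) * D ≤ (1 - γ) * ((θ - θstar) * (16 / (θstar ^ 2 * Real.exp 1 ^ 2)) *
        Real.exp (-(θstar ^ 2 / 2))) := by
        apply mul_le_mul_of_nonneg_left _ (by linarith)
        exact hub
    _ ≤ (1 - γ) * (4 * (Real.exp (-(9 * θstar ^ 2 / 32)) / (θstar ^ 2 * Real.exp 1 ^ 2)
          + (θstar ^ 2 / 16) * Real.exp (-(θstar ^ 2 / 2)))) * (θ - θstar) := by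
        have h1 : (0:ℝ) ≤ 1 - γ := by linarith
        have h2 : (0:ℝ) ≤ θ - θstar := by linarith
        nlinarith [mul_le_mul_of_nonneg_right hcoef h2, mul_le_mul_of_nonneg_left
          (mul_le_mul_of_nonneg_right hcoef h2) h1]
end

section
/- Let 0 < θ* ≤ θ, let p_{θ*}(y) = (1/(2√(2π)))(e^{−(y−θ*)²/2} + e^{−(y+θ*)²/2}), let q(y;θ) = 1/(1 + e^{2yθ}), and define f(θ) = −∫_ℝ q(y;θ) y p_{θ*}(y) dy. Then f(θ) − f(θ*) ≤ ∫_ℝ |y| ( e^{−2|y|θ*} − e^{−2|y|θ} ) p_{θ*}(y) dy. -/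
/-! With `σ` the logistic sigmoid, `q(y; θ) = 1 - σ(2yθ)`, so the integrand of `f θ - f θ*` is
`(σ(2yθ) - σ(2yθ*)) y p(y)`, an even function of `y` since `σ(-t) = 1 - σ(t)`. For `u ≤ v`,
`σ v - σ u = (e⁻ᵘ - e⁻ᵛ) / ((1 + e⁻ᵘ)(1 + e⁻ᵛ)) ≤ e⁻ᵘ - e⁻ᵛ`, which at `u = 2|y|θ*`, `v = 2|y|θ`
bounds the integrands pointwise. Every integrand is dominated by the integrable `|y| p(y)`. -/

open MeasureTheory Real

theorem one_div_one_add_exp_eq_one_sub_sigmoid (x : ℝ) : 1 / (1 + exp x) = 1 - sigmoid x := by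
  rw [← sigmoid_neg, sigmoid_def, neg_neg, one_div]

theorem sigmoid_sub_sigmoid_le_exp_neg_sub {u v : ℝ} (huv : u ≤ v) :
    sigmoid v - sigmoid u ≤ exp (-u) - exp (-v) := by
  have hexp : exp (-v) ≤ exp (-u) := exp_le_exp.2 (neg_le_neg huv)
  have hu := exp_pos (-u)
  have hv := exp_pos (-v)
  rw [sigmoid_def, sigmoid_def, inv_sub_inv (by positivity) (by positivity)]
  exact (div_le_self (by linarith) (by nlinarith)).trans_eq (by ring)

theorem sigmoid_mul_sub_sigmoid_mul_mul_self_eq_abs (a b y : ℝ) :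
    (sigmoid (y * b) - sigmoid (y * a)) * y = (sigmoid (|y| * b) - sigmoid (|y| * a)) * |y| := by
  rcases abs_cases y with ⟨hy, -⟩ | ⟨hy, -⟩
  · rw [hy]
  · rw [hy, neg_mul, neg_mul, sigmoid_neg, sigmoid_neg]
    ring

theorem sigmoid_mul_sub_sigmoid_mul_mul_self_le {a b : ℝ} (hab : a ≤ b) (y : ℝ) :
    (sigmoid (y * b) - sigmoid (y * a)) * y ≤ |y| * (exp (-(|y| * a)) - exp (-(|y| * b))) := by
  rw [sigmoid_mul_sub_sigmoid_mul_mul_self_eq_abs, mul_comm]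
  exact mul_le_mul_of_nonneg_left
    (sigmoid_sub_sigmoid_le_exp_neg_sub (mul_le_mul_of_nonneg_left hab (abs_nonneg y)))
    (abs_nonneg y)

theorem integrable_mul_exp_neg_sq_sub_div_two (m : ℝ) :
    Integrable fun y : ℝ => y * exp (-(y - m) ^ 2 / 2) := by
  have h := ((integrable_mul_exp_neg_mul_sq (b := 1 / 2) (by norm_num)).add
    ((integrable_exp_neg_mul_sq (b := 1 / 2) (by norm_num)).const_mul m)).comp_sub_right m
  refine h.congr (ae_of_all _ fun y => ?_)
  simp only [Pi.add_apply]
  ring_nf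

theorem integrable_mul_gaussian_mixture (c m : ℝ) :
    Integrable fun y : ℝ => y * (c * (exp (-(y - m) ^ 2 / 2) + exp (-(y + m) ^ 2 / 2))) := by
  have h := integrable_mul_exp_neg_sq_sub_div_two
  refine (((h m).add (h (-m))).const_mul c).congr (ae_of_all _ fun y => ?_)
  simp only [Pi.add_apply, sub_neg_eq_add]
  ring

theorem MeasureTheory.Integrable.one_div_one_add_exp_mul {g w : ℝ → ℝ} (hg : Measurable g)
    (hw : Integrable fun y => y * w y) :
    Integrable fun y => 1 / (1 + exp (g y)) * y * w y := by
  refine (hw.bdd_mul (c := 1) (Measurable.aestronglyMeasurable (by fun_prop))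
    (ae_of_all _ fun y => ?_)).congr (ae_of_all _ fun y => (mul_assoc _ _ _).symm)
  rw [Real.norm_of_nonneg (by positivity), div_le_one (by positivity)]
  linarith [exp_pos (g y)]

theorem MeasureTheory.Integrable.abs_mul_exp_neg_sub_exp_neg_mul {u v w : ℝ → ℝ}
    (hu : Measurable u) (hv : Measurable v) (hu_nonneg : ∀ y, 0 ≤ u y) (huv : ∀ y, u y ≤ v y)
    (hw : Integrable fun y => |y| * w y) :
    Integrable fun y => |y| * (exp (-u y) - exp (-v y)) * w y := by
  refine (hw.bdd_mul (c := 1) (f := fun y => exp (-u y) - exp (-v y)) (by fun_prop)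
    (ae_of_all _ fun y => ?_)).congr (ae_of_all _ fun y => by ring)
  have : exp (-v y) ≤ exp (-u y) := exp_le_exp.2 (neg_le_neg (huv y))
  have : exp (-u y) ≤ 1 := exp_le_one_iff.2 (neg_nonpos.2 (hu_nonneg y))
  rw [Real.norm_eq_abs, abs_le]
  constructor <;> linarith [exp_pos (-v y)]

/-- intermediate bound in the proof of Theorem 3, item 3, for
`f(θ) = −E[q(Y;θ) Y]` under the symmetric two-component Gaussian mixture. -/
theorem gradient_difference_intermediate_bound
    (θstar θ : ℝ) (h1 : 0 < θstar) (h2 : θstar ≤ θ)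
    (p : ℝ → ℝ)
    (hp : p = fun y => (1 / (2 * Real.sqrt (2 * Real.pi))) *
      (Real.exp (-(y - θstar) ^ 2 / 2) + Real.exp (-(y + θstar) ^ 2 / 2)))
    (q : ℝ → ℝ → ℝ)
    (hq : q = fun θ' y => 1 / (1 + Real.exp (2 * y * θ')))
    (f : ℝ → ℝ)
    (hf : f = fun θ' => -∫ y : ℝ, q θ' y * y * p y) :
    f θ - f θstar ≤
      ∫ y : ℝ, |y| * (Real.exp (-(2 * |y| * θstar)) - Real.exp (-(2 * |y| * θ))) * p y := by
  have hp_nonneg (y : ℝ) : 0 ≤ p y := by rw [hp]; positivity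
  have h_mul_p : Integrable fun y => y * p y := by
    rw [hp]; exact integrable_mul_gaussian_mixture _ _
  have h_abs_mul_p : Integrable fun y => |y| * p y := by
    simpa [abs_mul, abs_of_nonneg, hp_nonneg] using h_mul_p.norm
  have hq_int (θ' : ℝ) : Integrable fun y => q θ' y * y * p y := by
    rw [hq]; exact h_mul_p.one_div_one_add_exp_mul (g := fun y => 2 * y * θ') (by fun_prop)
  have hbound_int := h_abs_mul_p.abs_mul_exp_neg_sub_exp_neg_mul
    (u := fun y => 2 * |y| * θstar) (v := fun y => 2 * |y| * θ) (by fun_prop) (by fun_prop)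
    (fun y => by positivity) (fun y => by gcongr)
  have hq_sigmoid (θ' y : ℝ) : q θ' y = 1 - sigmoid (y * (2 * θ')) := by
    rw [hq, ← mul_assoc, mul_comm y 2, ← one_div_one_add_exp_eq_one_sub_sigmoid]
  calc f θ - f θstar = ∫ y, (q θstar y * y * p y - q θ y * y * p y) := by
        rw [hf, integral_sub (hq_int θstar) (hq_int θ)]; ring
    _ ≤ _ := by
      refine integral_mono ((hq_int θstar).sub (hq_int θ)) hbound_int fun y => ?_
      have key :=
        sigmoid_mul_sub_sigmoid_mul_mul_self_le (mul_le_mul_of_nonneg_left h2 two_pos.le) y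
      rw [mul_left_comm |y| 2, mul_left_comm |y| 2, ← mul_assoc 2 |y| θstar, ← mul_assoc 2 |y| θ]
        at key
      simp only [hq_sigmoid]
      linarith [mul_le_mul_of_nonneg_right key (hp_nonneg y)]
end
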